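/- The R-matrix R(λ), the 4×4 matrix with rows (1,0,0,0), (0, sin(λ)/sin(λ+η), sin(η)/sin(λ+η), 0), (0, sin(η)/sin(λ+η), sin(λ)/sin(λ+η), 0), (0,0,0,1), satisfies the Yang–Baxter equation R₁₂(λ−μ)R₁₃(λ)R₂₃(μ) = R₂₃(μ)R₁₃(λ)R₁₂(λ−μ) on C²⊗C²⊗C². -/

import Mathlib

open Matrix Complex

/-- The six-vertex `R`-matrix of the XXZ model on `ℂ² ⊗ ℂ²`, with entries
`R_{(a,b),(a,b)} = 1` if `a = b`, `sin λ / sin (λ+η)` on the remaining diagonal,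
and `sin η / sin (λ+η)` on the anti-diagonal of the middle block. -/
noncomputable def Rm (η lam : ℂ) : Matrix (Fin 2 × Fin 2) (Fin 2 × Fin 2) ℂ :=
  fun p q =>
    if p = q then
      (if p.1 = p.2 then 1 else Complex.sin lam / Complex.sin (lam + η))
    else if p.1 = q.2 ∧ p.2 = q.1 then Complex.sin η / Complex.sin (lam + η)
    else 0

/-- `R₁₂ = R ⊗ I` acting on the first two factors of `ℂ² ⊗ ℂ² ⊗ ℂ²`. -/
noncomputable def R12 (η lam : ℂ) :
    Matrix (Fin 2 × Fin 2 × Fin 2) (Fin 2 × Fin 2 × Fin 2) ℂ :=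
  fun p q => Rm η lam (p.1, p.2.1) (q.1, q.2.1) * (if p.2.2 = q.2.2 then 1 else 0)

/-- `R₁₃` acting on the first and third factors of `ℂ² ⊗ ℂ² ⊗ ℂ²`. -/
noncomputable def R13 (η lam : ℂ) :
    Matrix (Fin 2 × Fin 2 × Fin 2) (Fin 2 × Fin 2 × Fin 2) ℂ :=
  fun p q => Rm η lam (p.1, p.2.2) (q.1, q.2.2) * (if p.2.1 = q.2.1 then 1 else 0)

/-- `R₂₃ = I ⊗ R` acting on the last two factors of `ℂ² ⊗ ℂ² ⊗ ℂ²`. -/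
noncomputable def R23 (η lam : ℂ) :
    Matrix (Fin 2 × Fin 2 × Fin 2) (Fin 2 × Fin 2 × Fin 2) ℂ :=
  fun p q => Rm η lam (p.2.1, p.2.2) (q.2.1, q.2.2) * (if p.1 = q.1 then 1 else 0)


lemma mysin (z : ℂ) :
    Complex.sin z = (Complex.exp (z * I) ^ 2 - 1) / (2 * I * Complex.exp (z * I)) := by
  rw [Complex.sin, show -z * I = -(z * I) by ring, Complex.exp_neg]
  have hz := Complex.exp_ne_zero (z * I)
  field_simp
  linear_combination (1 - Complex.exp (z * I) ^ 2) * Complex.I_sq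

set_option maxHeartbeats 0 in
/-- The Yang–Baxter equation for the six-vertex `R`-matrix:
`R₁₂(λ−μ) R₁₃(λ) R₂₃(μ) = R₂₃(μ) R₁₃(λ) R₁₂(λ−μ)`. -/
theorem yang_baxter (η lam mu : ℂ)
    (h1 : Complex.sin (lam + η) ≠ 0)
    (h2 : Complex.sin (mu + η) ≠ 0)
    (h3 : Complex.sin (lam - mu + η) ≠ 0) :
    R12 η (lam - mu) * R13 η lam * R23 η mu
      = R23 η mu * R13 η lam * R12 η (lam - mu) := by
  ext ⟨a, b, c⟩ ⟨d, e, f⟩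
  fin_cases a <;> fin_cases b <;> fin_cases c <;> fin_cases d <;> fin_cases e <;> fin_cases f <;>
  · simp only [Fin.mk_zero, Fin.mk_one, Fin.zero_eta]
    simp only [Matrix.mul_apply, Fintype.sum_prod_type, Fin.sum_univ_two, R12, R13, R23, Rm,
      Prod.mk.injEq, Prod.ext_iff]
    norm_num
    try field_simp
    try
      simp only [mysin, add_mul, sub_mul, Complex.exp_add, Complex.exp_sub, mul_pow, div_pow]
      set x := Complex.exp (lam * I) with hxd
      set y := Complex.exp (mu * I) with hyd
      set w := Complex.exp (η * I) with hwd
      have hx : x ≠ 0 := Complex.exp_ne_zero _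
      have hy : y ≠ 0 := Complex.exp_ne_zero _
      have hw : w ≠ 0 := Complex.exp_ne_zero _
      field_simp
      try repeat rw [div_add_div _ _ (by simp [hx, hy, hw, Complex.I_ne_zero])
        (by simp [hx, hy, hw, Complex.I_ne_zero])]
      try rw [div_eq_div_iff (by simp [hx, hy, hw, Complex.I_ne_zero])
        (by simp [hx, hy, hw, Complex.I_ne_zero])]
      try rw [div_eq_iff (by simp [hx, hy, hw, Complex.I_ne_zero])]
      try rw [eq_div_iff (by simp [hx, hy, hw, Complex.I_ne_zero])]
      ring
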